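/- Suppose nonnegative real numbers a_1, a_2, …, a_{N+1} and f_2, …, f_{N+1} satisfy, for every n with 2 ≤ n ≤ N+1, the recursive inequality T̂_{n,n−1} a_n ≤ f_n + T̂_{n,1} a_1 + Σ_{j=2}^{n−1} (T̂_{n,j} − T̂_{n,j−1}) a_j. Then for every n with 2 ≤ n ≤ N+1 one has the discrete Grönwall-type bound a_n ≤ a_1 + Γ(2−α) τ_{n−1}^α Σ_{j=2}^n θ_{n,j} f_j. -/

import Mathlib

/-- Graded temporal mesh `t_n = T ((n-1)/N)^r`. -/
noncomputable def tmesh (T r : ℝ) (N n : ℕ) : ℝ := T * (((n : ℝ) - 1) / (N : ℝ)) ^ r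

/-- Step sizes `τ_n = t_{n+1} - t_n`. -/
noncomputable def tau (T r : ℝ) (N n : ℕ) : ℝ := tmesh T r N (n + 1) - tmesh T r N n

/-- L1 coefficients `T̂_{n,j}` (with the convention `T̂_{n,0} = 0`). -/
noncomputable def That (α T r : ℝ) (N n j : ℕ) : ℝ :=
  if j = 0 then 0 else
    ((tmesh T r N n - tmesh T r N j) ^ (1 - α) -
        (tmesh T r N n - tmesh T r N (j + 1)) ^ (1 - α)) /
      (tau T r N j * Real.Gamma (2 - α))

/-- The multipliers `θ_{n,j}`: `θ_{n,n} = 1` and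
`θ_{n,j} = Σ_{k=1}^{n-j} τ_{n-k}^α θ_{n-k,j} (T̂_{n,n-k} - T̂_{n,n-k-1})`. -/
noncomputable def theta (α T r : ℝ) (N : ℕ) : ℕ → ℕ → ℝ
  | n, j =>
    if n = j then 1
    else
      ∑ k ∈ (Finset.Icc 1 (n - j)).attach,
        tau T r N (n - k.1) ^ α * theta α T r N (n - k.1) j *
          (That α T r N n (n - k.1) - That α T r N n (n - k.1 - 1))
  termination_by n j => n
  decreasing_by
    have hk := Finset.mem_Icc.mp k.2
    omega

/-! Strong induction on `n`. Concavity of `x ↦ x ^ (1 - α)` makes the L1 coefficients `T̂_{n,j}`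
nondecreasing in `j`, so the differences `T̂_{n,j} - T̂_{n,j-1}` are nonnegative weights and the
induction hypothesis can be substituted into the recursion. The weights telescope against `a_1`,
and the recursion defining `θ` is exactly what collects the resulting double sum into
`Σ_j θ_{n,j} f_j`. The bound for `a_j` carries `Γ(2-α) τ_{j-1}^α` while `θ` weighs with `τ_j^α`;
convexity of the graded mesh (`r ≥ 1`) and `Γ(2-α) ≤ 1` bridge the two. Finally
`Γ(2-α) τ_{n-1}^α T̂_{n,n-1} = 1`. -/

open Finset

section Mesh

variable {T r : ℝ} {N : ℕ}

lemma tmesh_strictMonoOn (hT : 0 < T) (hr : 0 < r) (hN : 0 < N) :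
    StrictMonoOn (tmesh T r N) (Set.Ici 1) := by
  intro j hj k _ hjk
  have hj' : (1 : ℝ) ≤ j := by exact_mod_cast Set.mem_Ici.mp hj
  have hjk' : (j : ℝ) < k := by exact_mod_cast hjk
  unfold tmesh
  gcongr

lemma tau_pos (hT : 0 < T) (hr : 0 < r) (hN : 0 < N) {j : ℕ} (hj : 1 ≤ j) :
    0 < tau T r N j :=
  sub_pos.mpr <| tmesh_strictMonoOn hT hr hN (Set.mem_Ici.mpr hj)
    (Set.mem_Ici.mpr (by omega)) (Nat.lt_succ_self j)

lemma tau_pred_le (hT : 0 ≤ T) (hr : 1 ≤ r) (hN : 0 < N) {j : ℕ} (hj : 2 ≤ j) :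
    tau T r N (j - 1) ≤ tau T r N j := by
  obtain ⟨i, rfl⟩ : ∃ i, j = i + 2 := ⟨j - 2, by omega⟩
  have hN' : (0 : ℝ) < N := by exact_mod_cast hN
  have hconv := (convexOn_rpow hr).slope_mono_adjacent (x := (i : ℝ) / N)
    (y := (i + 1 : ℝ) / N) (z := (i + 2 : ℝ) / N) (Set.mem_Ici.mpr (by positivity))
    (Set.mem_Ici.mpr (by positivity)) (by gcongr; linarith) (by gcongr; linarith)
  have hstep : ∀ x : ℝ, (x + 1) / N - x / N = 1 / N := fun x => by ring
  rw [hstep, show (i + 2 : ℝ) / N - (i + 1) / N = 1 / N by ring,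
    div_le_div_iff_of_pos_right (by positivity)] at hconv
  simp only [tau, tmesh, show i + 2 - 1 = i + 1 by omega]
  push_cast
  ring_nf at hconv ⊢
  nlinarith

end Mesh

lemma Real.Gamma_le_one_of_mem_Icc {s : ℝ} (hs : s ∈ Set.Icc 1 2) : Real.Gamma s ≤ 1 := by
  obtain ⟨h1, h2⟩ := hs
  have hconv := Real.convexOn_Gamma.2 (Set.mem_Ioi.mpr one_pos) (Set.mem_Ioi.mpr two_pos)
    (sub_nonneg.mpr h2) (sub_nonneg.mpr h1) (by ring)
  simp only [smul_eq_mul, Real.Gamma_one, Real.Gamma_two] at hconv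
  calc Real.Gamma s = Real.Gamma ((2 - s) * 1 + (s - 1) * 2) := by ring_nf
    _ ≤ (2 - s) * 1 + (s - 1) * 1 := hconv
    _ = 1 := by ring

section Coefficients

variable {α T r : ℝ} {N : ℕ}

lemma That_succ_self (hα : α ≠ 1) {j : ℕ} (hj : j ≠ 0) (hτ : 0 < tau T r N j) :
    That α T r N (j + 1) j = (Real.Gamma (2 - α) * tau T r N j ^ α)⁻¹ := by
  have hτ' : tmesh T r N (j + 1) - tmesh T r N j = tau T r N j := rfl
  rw [That, if_neg hj, sub_self, Real.zero_rpow (sub_ne_zero.mpr hα.symm), sub_zero, hτ',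
    Real.rpow_sub hτ, Real.rpow_one]
  field_simp

lemma That_pred_le (hα : α ∈ Set.Ioo 0 1) (hT : 0 < T) (hr : 0 < r) (hN : 0 < N) {n j : ℕ}
    (hj : 2 ≤ j) (hjn : j < n) :
    That α T r N n (j - 1) ≤ That α T r N n j := by
  obtain ⟨i, rfl⟩ : ∃ i, j = i + 1 := ⟨j - 1, by omega⟩
  have hu : 0 ≤ tmesh T r N n - tmesh T r N (i + 2) := sub_nonneg.mpr <|
    (tmesh_strictMonoOn hT hr hN).monotoneOn (Set.mem_Ici.mpr (by omega))
      (Set.mem_Ici.mpr (by omega)) (by omega)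
  set u := tmesh T r N n - tmesh T r N (i + 2)
  set v := tmesh T r N n - tmesh T r N (i + 1)
  set w := tmesh T r N n - tmesh T r N i
  have hvu : v - u = tau T r N (i + 1) := by simp only [u, v, tau]; ring
  have hwv : w - v = tau T r N i := by simp only [v, w, tau]; ring
  have hτi := tau_pos hT hr hN (j := i) (by omega)
  have hτi1 := tau_pos hT hr hN (j := i + 1) (by omega)
  -- `Γ(2-α) T̂_{n,j}` is the slope of `x ↦ x ^ (1 - α)` over `[t_n - t_{j+1}, t_n - t_j]`
  have hslope := (Real.concaveOn_rpow (sub_nonneg.mpr hα.2.le)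
    (by linarith [hα.1])).slope_anti_adjacent (Set.mem_Ici.mpr hu)
    (Set.mem_Ici.mpr (by linarith : 0 ≤ w)) (by linarith : u < v) (by linarith : v < w)
  have hΓ : 0 < Real.Gamma (2 - α) := Real.Gamma_pos_of_pos (by linarith [hα.2])
  rw [hvu, hwv] at hslope
  simp only [That, add_tsub_cancel_right, if_neg (by omega : i ≠ 0), if_neg (Nat.succ_ne_zero i),
    ← div_div]
  exact div_le_div_of_nonneg_right hslope hΓ.le

lemma Gamma_mul_tau_pred_rpow_le (hα : α ∈ Set.Ioo 0 1) (hT : 0 < T) (hr : 1 ≤ r) (hN : 0 < N)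
    {j : ℕ} (hj : 2 ≤ j) :
    Real.Gamma (2 - α) * tau T r N (j - 1) ^ α ≤ tau T r N j ^ α := by
  have hτ := (tau_pos hT (by linarith) hN (j := j - 1) (by omega)).le
  calc Real.Gamma (2 - α) * tau T r N (j - 1) ^ α ≤ 1 * tau T r N (j - 1) ^ α := by
        gcongr
        exact Real.Gamma_le_one_of_mem_Icc ⟨by linarith [hα.2], by linarith [hα.1]⟩
    _ ≤ tau T r N j ^ α := by
        rw [one_mul]
        exact Real.rpow_le_rpow hτ (tau_pred_le hT.le hr hN hj) hα.1.le

lemma theta_self (n : ℕ) : theta α T r N n n = 1 := by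
  rw [theta, if_pos rfl]

lemma theta_eq_sum {n j : ℕ} (hjn : j < n) :
    theta α T r N n j = ∑ m ∈ Icc j (n - 1),
      tau T r N m ^ α * theta α T r N m j * (That α T r N n m - That α T r N n (m - 1)) := by
  rw [theta, if_neg hjn.ne', sum_attach (Icc 1 (n - j)) fun k =>
    tau T r N (n - k) ^ α * theta α T r N (n - k) j *
      (That α T r N n (n - k) - That α T r N n (n - k - 1))]
  refine sum_nbij' (fun k => n - k) (fun m => n - m) ?_ ?_ ?_ ?_ fun _ _ => rfl <;>
    intro k hk <;> simp only [mem_Icc] at hk ⊢ <;> omega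

lemma theta_nonneg (hα : α ∈ Set.Ioo 0 1) (hT : 0 < T) (hr : 0 < r) (hN : 0 < N) {n j : ℕ}
    (hj : 2 ≤ j) (hjn : j ≤ n) : 0 ≤ theta α T r N n j := by
  induction n using Nat.strong_induction_on with
  | _ n ih =>
    rcases hjn.eq_or_lt with rfl | hjn
    · rw [theta_self]; exact zero_le_one
    rw [theta_eq_sum hjn]
    refine sum_nonneg fun m hm => ?_
    obtain ⟨hjm, hmn⟩ := mem_Icc.mp hm
    have hτ := (tau_pos hT hr hN (j := m) (by omega)).le
    have hΔ := sub_nonneg.mpr (That_pred_le hα hT hr hN (n := n) (j := m) (by omega) (by omega))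
    exact mul_nonneg (mul_nonneg (Real.rpow_nonneg hτ α) (ih m (by omega) hjm)) hΔ

end Coefficients

lemma Finset.sum_Icc_two_sub_pred {M : Type*} [AddCommGroup M] (g : ℕ → M) {m : ℕ}
    (hm : 1 ≤ m) :
    ∑ j ∈ Icc 2 m, (g j - g (j - 1)) = g m - g 1 := by
  induction m, hm using Nat.le_induction with
  | base => simp
  | succ m hm ih =>
    rw [sum_Icc_succ_top (by omega), ih, Nat.add_sub_cancel]
    abel

section Gronwall

variable {α T r : ℝ} {N : ℕ}

lemma sum_That_sub_mul_theta_sum (f : ℕ → ℝ) (n : ℕ) :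
    ∑ j ∈ Icc 2 (n - 1), (That α T r N n j - That α T r N n (j - 1)) *
        (tau T r N j ^ α * ∑ i ∈ Icc 2 j, theta α T r N j i * f i) =
      ∑ i ∈ Icc 2 (n - 1), theta α T r N n i * f i := by
  calc _ = ∑ j ∈ Icc 2 (n - 1), ∑ i ∈ Icc 2 j, tau T r N j ^ α * theta α T r N j i *
          (That α T r N n j - That α T r N n (j - 1)) * f i := by
        simp only [mul_sum]
        exact sum_congr rfl fun _ _ => sum_congr rfl fun _ _ => by ring
    _ = ∑ i ∈ Icc 2 (n - 1), ∑ j ∈ Icc i (n - 1), tau T r N j ^ α * theta α T r N j i *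
          (That α T r N n j - That α T r N n (j - 1)) * f i :=
        sum_comm' fun _ _ => by simp only [mem_Icc]; omega
    _ = _ := sum_congr rfl fun i hi => by
        rw [← sum_mul, ← theta_eq_sum (by simp only [mem_Icc] at hi; omega)]

theorem gronwall_step (hα : α ∈ Set.Ioo 0 1) (hT : 0 < T) (hr : 0 < r) (hN : 0 < N)
    (a f : ℕ → ℝ) {n : ℕ} (hn : 2 ≤ n)
    (hprev : ∀ j ∈ Icc 2 (n - 1),
      a j ≤ a 1 + tau T r N j ^ α * ∑ i ∈ Icc 2 j, theta α T r N j i * f i)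
    (hrec : That α T r N n (n - 1) * a n ≤ f n + That α T r N n 1 * a 1 +
      ∑ j ∈ Icc 2 (n - 1), (That α T r N n j - That α T r N n (j - 1)) * a j) :
    a n ≤ a 1 + Real.Gamma (2 - α) * tau T r N (n - 1) ^ α *
      ∑ j ∈ Icc 2 n, theta α T r N n j * f j := by
  have hsum : ∑ j ∈ Icc 2 (n - 1), (That α T r N n j - That α T r N n (j - 1)) * a j ≤
      (That α T r N n (n - 1) - That α T r N n 1) * a 1 +
        ∑ i ∈ Icc 2 (n - 1), theta α T r N n i * f i := by
    calc _ ≤ ∑ j ∈ Icc 2 (n - 1), (That α T r N n j - That α T r N n (j - 1)) *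
          (a 1 + tau T r N j ^ α * ∑ i ∈ Icc 2 j, theta α T r N j i * f i) := by
          refine sum_le_sum fun j hj => mul_le_mul_of_nonneg_left (hprev j hj) ?_
          obtain ⟨hj2, hjn⟩ := mem_Icc.mp hj
          exact sub_nonneg.mpr (That_pred_le hα hT hr hN hj2 (by omega))
      _ = _ := by
          simp only [mul_add, sum_add_distrib, ← sum_mul, sum_That_sub_mul_theta_sum,
            sum_Icc_two_sub_pred (That α T r N n) (by omega : 1 ≤ n - 1)]
  have hsplit : ∑ j ∈ Icc 2 n, theta α T r N n j * f j =
      f n + ∑ j ∈ Icc 2 (n - 1), theta α T r N n j * f j := by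
    obtain ⟨m, rfl⟩ : ∃ m, n = m + 1 := ⟨n - 1, by omega⟩
    rw [sum_Icc_succ_top (by omega), theta_self, one_mul, add_comm, Nat.add_sub_cancel]
  have hlast : That α T r N n (n - 1) = (Real.Gamma (2 - α) * tau T r N (n - 1) ^ α)⁻¹ := by
    obtain ⟨m, rfl⟩ : ∃ m, n = m + 1 := ⟨n - 1, by omega⟩
    exact That_succ_self hα.2.ne (by omega) (tau_pos hT hr hN (by omega))
  have hc : 0 < Real.Gamma (2 - α) * tau T r N (n - 1) ^ α :=
    mul_pos (Real.Gamma_pos_of_pos (by linarith [hα.2]))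
      (Real.rpow_pos_of_pos (tau_pos hT hr hN (by omega)) α)
  rw [← sub_le_iff_le_add', ← inv_mul_le_iff₀ hc, ← hlast, hsplit]
  linarith

end Gronwall

namespace L1

theorem discrete_gronwall_general (α T r : ℝ) (hα : α ∈ Set.Ioo (0 : ℝ) 1) (hT : 0 < T)
    (hr : 1 ≤ r) (N : ℕ) (a f : ℕ → ℝ)
    (hf : ∀ n, 2 ≤ n → n ≤ N + 1 → 0 ≤ f n)
    (hrec : ∀ n, 2 ≤ n → n ≤ N + 1 →
      That α T r N n (n - 1) * a n ≤
        f n + That α T r N n 1 * a 1 +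
          ∑ j ∈ Finset.Icc 2 (n - 1), (That α T r N n j - That α T r N n (j - 1)) * a j) :
    ∀ n, 2 ≤ n → n ≤ N + 1 →
      a n ≤ a 1 + Real.Gamma (2 - α) * tau T r N (n - 1) ^ α *
        ∑ j ∈ Finset.Icc 2 n, theta α T r N n j * f j := by
  intro n
  induction n using Nat.strong_induction_on with
  | _ n ih =>
    intro hn hnN
    have hN : 0 < N := by omega
    refine gronwall_step hα hT (by linarith) hN a f hn (fun j hj => ?_) (hrec n hn hnN)
    obtain ⟨hj2, hjn⟩ := mem_Icc.mp hj
    have hS : 0 ≤ ∑ i ∈ Icc 2 j, theta α T r N j i * f i :=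
      sum_nonneg fun i hi => by
        obtain ⟨hi2, hij⟩ := mem_Icc.mp hi
        exact mul_nonneg (theta_nonneg hα hT (by linarith) hN hi2 hij) (hf i hi2 (by omega))
    calc a j ≤ a 1 + Real.Gamma (2 - α) * tau T r N (j - 1) ^ α *
          ∑ i ∈ Icc 2 j, theta α T r N j i * f i := ih j (by omega) hj2 (by omega)
      _ ≤ a 1 + tau T r N j ^ α * ∑ i ∈ Icc 2 j, theta α T r N j i * f i := by
        gcongr
        exact Gamma_mul_tau_pred_rpow_le hα hT hr hN hj2

/-- discrete Grönwall-type inequality.  If nonnegative reals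
`a_1,…,a_{N+1}` and `f_2,…,f_{N+1}` satisfy
`T̂_{n,n-1} a_n ≤ f_n + T̂_{n,1} a_1 + Σ_{j=2}^{n-1}(T̂_{n,j} - T̂_{n,j-1}) a_j`
for `2 ≤ n ≤ N+1`, then
`a_n ≤ a_1 + Γ(2-α) τ_{n-1}^α Σ_{j=2}^n θ_{n,j} f_j`. -/
theorem discrete_gronwall (α T r : ℝ) (hα : α ∈ Set.Ioo (0 : ℝ) 1) (hT : 0 < T)
    (hr : 1 ≤ r) (N : ℕ) (hN : 0 < N) (a f : ℕ → ℝ)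
    (ha : ∀ n, 1 ≤ n → n ≤ N + 1 → 0 ≤ a n)
    (hf : ∀ n, 2 ≤ n → n ≤ N + 1 → 0 ≤ f n)
    (hrec : ∀ n, 2 ≤ n → n ≤ N + 1 →
      That α T r N n (n - 1) * a n ≤
        f n + That α T r N n 1 * a 1 +
          ∑ j ∈ Finset.Icc 2 (n - 1), (That α T r N n j - That α T r N n (j - 1)) * a j) :
    ∀ n, 2 ≤ n → n ≤ N + 1 →
      a n ≤ a 1 + Real.Gamma (2 - α) * tau T r N (n - 1) ^ α *
        ∑ j ∈ Finset.Icc 2 n, theta α T r N n j * f j :=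
  discrete_gronwall_general α T r hα hT hr N a f hf hrec
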